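/- Let n ≥ 1, let v ∈ ℝⁿ be a nonzero vector, and let s ≥ 1 be an integer. Then the expected number of nonzero coordinates of the stochastic quantization Q_s(v) satisfies E[‖Q_s(v)‖₀] ≤ s·(s + √n), where ‖w‖₀ denotes the number of indices i with w_i ≠ 0. -/

import Mathlib

/-!
Coordinate `i` of `Q_s(v)` can be nonzero only if `ξᵢ ≠ 0`, and `P(ξᵢ ≠ 0) ≤ s·aᵢ`: for `ℓᵢ = 0`
this is an equality, and for `ℓᵢ ≥ 1` one has `s·aᵢ ≥ ℓᵢ ≥ 1`. Summing over the coordinates, the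
expected count is at most `s·‖a‖₁ ≤ s·√n·‖a‖₂ ≤ s√n` by Cauchy–Schwarz.
-/

open MeasureTheory ProbabilityTheory

/-- `Qv` is (a realization on the probability space `(Ω, μ)` of) the stochastic
quantization `Q_s(v)` of the nonzero vector `v ∈ ℝⁿ` with `s` quantization levels:
`Q_s(v)_i = ‖v‖₂ · sgn(vᵢ) · ξᵢ`, where the `ξᵢ` are independent, and, with
`aᵢ = |vᵢ|/‖v‖₂` and `ℓᵢ ∈ {0, …, s−1}` such that `aᵢ ∈ [ℓᵢ/s, (ℓᵢ+1)/s]`, `ξᵢ` takes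
the value `(ℓᵢ+1)/s` with probability `pᵢ = aᵢ·s − ℓᵢ` and `ℓᵢ/s` with probability
`1 − pᵢ`. -/
def IsStochQuant {n : ℕ} (s : ℕ) {Ω : Type*} [MeasurableSpace Ω] (μ : Measure Ω)
    (v : EuclideanSpace ℝ (Fin n)) (Qv : Ω → EuclideanSpace ℝ (Fin n)) : Prop :=
  ∃ (ξ : Fin n → Ω → ℝ) (ℓ : Fin n → ℕ),
    (∀ i, Measurable (ξ i)) ∧
    iIndepFun ξ μ ∧
    (∀ i, ℓ i ≤ s - 1) ∧
    (∀ i, (ℓ i : ℝ) / s ≤ |v i| / ‖v‖ ∧ |v i| / ‖v‖ ≤ ((ℓ i : ℝ) + 1) / s) ∧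
    (∀ i, μ {ω | ξ i ω = ((ℓ i : ℝ) + 1) / s} =
        ENNReal.ofReal (|v i| / ‖v‖ * s - ℓ i)) ∧
    (∀ i, μ {ω | ξ i ω = (ℓ i : ℝ) / s} =
        1 - ENNReal.ofReal (|v i| / ‖v‖ * s - ℓ i)) ∧
    (∀ ω i, Qv ω i = ‖v‖ * (if 0 ≤ v i then (1 : ℝ) else -1) * ξ i ω)

open Finset

theorem sum_abs_le_sqrt_card_mul_norm {ι : Type*} [Fintype ι] (v : EuclideanSpace ℝ ι) :
    ∑ i, |v i| ≤ √(Fintype.card ι) * ‖v‖ := by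
  rw [← Real.sqrt_sq (norm_nonneg v), ← Real.sqrt_mul (Nat.cast_nonneg _)]
  apply Real.le_sqrt_of_sq_le
  simpa [EuclideanSpace.norm_sq_eq] using
    sq_sum_le_card_mul_sum_sq (s := univ) (f := fun i => |v i|)

theorem integral_card_filter_eq_sum_measureReal {Ω ι : Type*} [MeasurableSpace Ω]
    {μ : Measure Ω} [IsFiniteMeasure μ] [Fintype ι] {A : ι → Set Ω}
    (hA : ∀ i, MeasurableSet (A i)) [∀ i ω, Decidable (ω ∈ A i)] :
    ∫ ω, (#{i | ω ∈ A i} : ℝ) ∂μ = ∑ i, μ.real (A i) := by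
  have hcard (ω : Ω) : (#{i | ω ∈ A i} : ℝ) = ∑ i, (A i).indicator 1 ω := by
    simp only [natCast_card_filter, Set.indicator_apply, Pi.one_apply]
  simp_rw [hcard]
  have hint (i : ι) : Integrable ((A i).indicator (1 : Ω → ℝ)) μ :=
    (integrable_const 1).indicator (hA i)
  rw [integral_finsetSum _ fun i _ => hint i]
  exact sum_congr rfl fun i _ => integral_indicator_one (hA i)

theorem measureReal_ne_zero_le_of_measure_eq_lower_level {Ω : Type*} [MeasurableSpace Ω]
    {μ : Measure Ω} [IsProbabilityMeasure μ] {ξ : Ω → ℝ} (hξ : Measurable ξ) {s ℓ : ℕ}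
    (hs : 0 < s) {a : ℝ} (hℓa : ℓ / s ≤ a) (haℓ : a ≤ (ℓ + 1) / s)
    (hlow : μ {ω | ξ ω = ℓ / s} = 1 - ENNReal.ofReal (a * s - ℓ)) :
    μ.real {ω | ξ ω ≠ 0} ≤ s * a := by
  have hs' : (0 : ℝ) < s := Nat.cast_pos.mpr hs
  rcases Nat.eq_zero_or_pos ℓ with rfl | hℓ
  · rw [Nat.cast_zero, zero_add, le_div_iff₀ hs'] at haℓ
    rw [Nat.cast_zero, zero_div] at hℓa
    have has₀ : 0 ≤ a * s := mul_nonneg hℓa hs'.le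
    have hzero : μ {ω | ξ ω = 0} = 1 - ENNReal.ofReal (a * s) := by simpa using hlow
    have hmeas : MeasurableSet {ω | ξ ω = 0} := hξ (measurableSet_singleton 0)
    have hne : μ {ω | ξ ω ≠ 0} = ENNReal.ofReal (a * s) := by
      rw [← Set.compl_ofPred, prob_compl_eq_one_sub hmeas, hzero,
        ENNReal.sub_sub_cancel ENNReal.one_ne_top (ENNReal.ofReal_le_one.mpr haℓ)]
    rw [measureReal_def, hne, ENNReal.toReal_ofReal has₀, mul_comm]
  · have hℓ₁ : (1 : ℝ) ≤ ℓ := Nat.one_le_cast.mpr hℓ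
    rw [div_le_iff₀ hs'] at hℓa
    exact measureReal_le_one.trans (by linarith)

theorem stochQuant_sparsity_general {n : ℕ}
    (v : EuclideanSpace ℝ (Fin n)) (s : ℕ) (hs : 1 ≤ s)
    {Ω : Type*} [MeasurableSpace Ω] (μ : Measure Ω) [IsProbabilityMeasure μ]
    (Qv : Ω → EuclideanSpace ℝ (Fin n)) (hQ : IsStochQuant s μ v Qv) :
    ∫ ω, ((Finset.univ.filter (fun i : Fin n => Qv ω i ≠ 0)).card : ℝ) ∂μ ≤
      (s : ℝ) * (s + Real.sqrt n) := by
  obtain ⟨ξ, ℓ, hξ, -, -, hlevel, -, hlow, hQξ⟩ := hQ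
  have hQ_meas (i : Fin n) : MeasurableSet {ω | Qv ω i ≠ 0} := by
    simp_rw [hQξ]
    exact ((measurable_const.mul (hξ i)) (measurableSet_singleton 0)).compl
  have hQ_sub (i : Fin n) : {ω | Qv ω i ≠ 0} ⊆ {ω | ξ i ω ≠ 0} := fun ω hω h0 => by
    simp [hQξ, h0] at hω
  have hl1 : ∑ i, |v i| / ‖v‖ ≤ √n := by
    rw [← sum_div]
    refine div_le_of_le_mul₀ (norm_nonneg v) (Real.sqrt_nonneg _) ?_
    simpa using sum_abs_le_sqrt_card_mul_norm v
  calc ∫ ω, (#{i | Qv ω i ≠ 0} : ℝ) ∂μ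
      = ∑ i, μ.real {ω | Qv ω i ≠ 0} := integral_card_filter_eq_sum_measureReal hQ_meas
    _ ≤ ∑ i, μ.real {ω | ξ i ω ≠ 0} := sum_le_sum fun i _ => measureReal_mono (hQ_sub i)
    _ ≤ ∑ i, s * (|v i| / ‖v‖) := sum_le_sum fun i _ =>
        measureReal_ne_zero_le_of_measure_eq_lower_level (hξ i) hs (hlevel i).1 (hlevel i).2
          (hlow i)
    _ = s * ∑ i, |v i| / ‖v‖ := (mul_sum ..).symm
    _ ≤ s * (s + √n) := by gcongr; linarith

/-- **Sparsity of stochastic quantization:** the expected number of nonzero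
coordinates satisfies `E[‖Q_s(v)‖₀] ≤ s(s + √n)`. -/
theorem stochQuant_sparsity {n : ℕ} (hn : 1 ≤ n)
    (v : EuclideanSpace ℝ (Fin n)) (hv : v ≠ 0) (s : ℕ) (hs : 1 ≤ s)
    {Ω : Type*} [MeasurableSpace Ω] (μ : Measure Ω) [IsProbabilityMeasure μ]
    (Qv : Ω → EuclideanSpace ℝ (Fin n)) (hQ : IsStochQuant s μ v Qv) :
    ∫ ω, ((Finset.univ.filter (fun i : Fin n => Qv ω i ≠ 0)).card : ℝ) ∂μ ≤
      (s : ℝ) * (s + Real.sqrt n) :=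
  stochQuant_sparsity_general v s hs μ Qv hQ
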